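/- If two bipermutive local rules f, g : F_2^{b+1} → F_2 have identical nonlinear parts in their algebraic normal forms (i.e., f ⊕ g is affine), then for every i ∈ {1,…,b} the component function H_i ⊕ H_{b+i} of the superposition S-box H is affine; consequently the vectors e_i ⊕ e_{b+i} span a b-dimensional subspace of linear components of H, which is the polynomial code with generator polynomial 1 + X^b of length 2b and dimension b. -/
import Mathlib


/-- A Boolean function is affine if it is of the form `x ↦ a·x ⊕ c`. -/
def IsAffine {n : ℕ} (g : (Fin n → ZMod 2) → ZMod 2) : Prop :=
  ∃ (a : Fin n → ZMod 2) (c : ZMod 2), ∀ x, g x = (∑ i, a i * x i) + c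

/-- If two bipermutive local rules `f, g` have identical nonlinear parts in
their ANF (i.e. `f ⊕ g` is affine), then each `H_i ⊕ H_{b+i}` is an affine
component of the superposition S-box `H`; the vectors `e_i ⊕ e_{b+i}` span a
`b`-dimensional subspace of linear components of `H`, which is exactly the
polynomial code with generator `1 + X^b`, i.e. the set of vectors `u ‖ u`
(here `b = m + 1`). -/
theorem same_nonlinear_part_gives_code (m : ℕ)
    (f g : (Fin (m + 2) → ZMod 2) → ZMod 2)
    (f' g' : (Fin m → ZMod 2) → ZMod 2)
    (hf : ∀ x, f x = x 0 + f' (fun i => x i.succ.castSucc) + x (Fin.last (m + 1)))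
    (hg : ∀ x, g x = x 0 + g' (fun i => x i.succ.castSucc) + x (Fin.last (m + 1)))
    (hfg : IsAffine (fun x => f x + g x))
    (H : (Fin ((m + 1) + (m + 1)) → ZMod 2) → Fin ((m + 1) + (m + 1)) → ZMod 2)
    (hH : ∀ x (i : Fin (m + 1)),
      H x (Fin.castAdd (m + 1) i) =
        f (fun j : Fin (m + 2) => x ⟨i.val + j.val, by have := i.isLt; have := j.isLt; omega⟩) ∧
      H x (Fin.natAdd (m + 1) i) =
        g (fun j : Fin (m + 2) => x ⟨i.val + j.val, by have := i.isLt; have := j.isLt; omega⟩))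
    (E : Fin (m + 1) → Fin ((m + 1) + (m + 1)) → ZMod 2)
    (hE : ∀ i j, E i j =
      if j = Fin.castAdd (m + 1) i ∨ j = Fin.natAdd (m + 1) i then 1 else 0) :
    (∀ i : Fin (m + 1),
      IsAffine (fun x => H x (Fin.castAdd (m + 1) i) + H x (Fin.natAdd (m + 1) i))) ∧
    ((Submodule.span (ZMod 2) (Set.range E) : Set (Fin ((m + 1) + (m + 1)) → ZMod 2)) =
      {w | ∃ u : Fin (m + 1) → ZMod 2, w = Fin.append u u}) ∧
    (Module.finrank (ZMod 2) (Submodule.span (ZMod 2) (Set.range E)) = m + 1) ∧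
    (∀ w ∈ Submodule.span (ZMod 2) (Set.range E),
      IsAffine (fun x => ∑ j, w j * H x j)) := by
  classical
  obtain ⟨a, c, hac⟩ := hfg
  have hne : ∀ i : Fin (m + 1), Fin.castAdd (m + 1) i ≠ Fin.natAdd (m + 1) i := by
    intro i h
    have := congrArg Fin.val h
    simp only [Fin.coe_castAdd, Fin.coe_natAdd] at this
    omega
  -- Part 1 key lemma
  have key : ∀ i : Fin (m + 1),
      IsAffine (fun x : Fin ((m + 1) + (m + 1)) → ZMod 2 =>
        H x (Fin.castAdd (m + 1) i) + H x (Fin.natAdd (m + 1) i)) := by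
    intro i
    refine ⟨fun k => ∑ j : Fin (m + 2),
        if k = (⟨i.val + j.val, by have := i.isLt; have := j.isLt; omega⟩ :
          Fin ((m + 1) + (m + 1))) then a j else 0, c, ?_⟩
    intro x
    beta_reduce
    rw [(hH x i).1, (hH x i).2]
    have h0 := hac (fun j : Fin (m + 2) =>
      x ⟨i.val + j.val, by have := i.isLt; have := j.isLt; omega⟩)
    simp only at h0
    rw [h0]
    congr 1
    symm
    calc ∑ k, (∑ j : Fin (m + 2),
          if k = (⟨i.val + j.val, by have := i.isLt; have := j.isLt; omega⟩ :
            Fin ((m + 1) + (m + 1))) then a j else 0) * x k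
        = ∑ k, ∑ j : Fin (m + 2),
            (if k = (⟨i.val + j.val, by have := i.isLt; have := j.isLt; omega⟩ :
              Fin ((m + 1) + (m + 1))) then a j * x k else 0) := by
          simp [Finset.sum_mul, ite_mul]
      _ = ∑ j : Fin (m + 2), ∑ k,
            (if k = (⟨i.val + j.val, by have := i.isLt; have := j.isLt; omega⟩ :
              Fin ((m + 1) + (m + 1))) then a j * x k else 0) := Finset.sum_comm
      _ = ∑ j : Fin (m + 2),
            a j * x ⟨i.val + j.val, by have := i.isLt; have := j.isLt; omega⟩ := by
          simp
  -- Sum over E i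
  have hEsum : ∀ (x) (i : Fin (m + 1)),
      ∑ j, E i j * H x j =
        H x (Fin.castAdd (m + 1) i) + H x (Fin.natAdd (m + 1) i) := by
    intro x i
    have hterm : ∀ j, E i j * H x j =
        (if j = Fin.castAdd (m + 1) i then H x j else 0) +
        (if j = Fin.natAdd (m + 1) i then H x j else 0) := by
      intro j
      rw [hE]
      rcases eq_or_ne j (Fin.castAdd (m + 1) i) with h1 | h1
      · subst h1
        rw [if_pos (Or.inl rfl), if_pos rfl, if_neg (hne i), one_mul, add_zero]
      · rcases eq_or_ne j (Fin.natAdd (m + 1) i) with h2 | h2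
        · subst h2
          rw [if_pos (Or.inr rfl), if_neg h1, if_pos rfl, one_mul, zero_add]
        · rw [if_neg (by tauto), if_neg h1, if_neg h2, zero_mul, add_zero]
    rw [Finset.sum_congr rfl fun j _ => hterm j, Finset.sum_add_distrib]
    simp
  -- Part 4
  have part4 : ∀ w ∈ Submodule.span (ZMod 2) (Set.range E),
      IsAffine (fun x => ∑ j, w j * H x j) := by
    intro w hw
    induction hw using Submodule.span_induction with
    | mem v hv =>
      obtain ⟨i, rfl⟩ := hv
      obtain ⟨a', c', h'⟩ := key i
      refine ⟨a', c', fun x => ?_⟩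
      beta_reduce
      rw [hEsum x i]
      exact h' x
    | zero => exact ⟨0, 0, by simp⟩
    | add u v _ _ hu hv =>
      obtain ⟨a1, c1, h1⟩ := hu
      obtain ⟨a2, c2, h2⟩ := hv
      refine ⟨a1 + a2, c1 + c2, fun x => ?_⟩
      have e1 := h1 x
      have e2 := h2 x
      simp only at e1 e2
      simp only [Pi.add_apply, add_mul, Finset.sum_add_distrib, e1, e2]
      ring
    | smul r u _ hu =>
      obtain ⟨a1, c1, h1⟩ := hu
      refine ⟨r • a1, r * c1, fun x => ?_⟩
      have e1 := h1 x
      simp only at e1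
      calc ∑ j, (r • u) j * H x j = r * ∑ j, u j * H x j := by
            simp [Finset.mul_sum, mul_assoc]
        _ = r * ((∑ i, a1 i * x i) + c1) := by rw [e1]
        _ = (∑ i, (r • a1) i * x i) + r * c1 := by
            simp [Finset.mul_sum, mul_add, mul_assoc]
  -- Part 2
  have part2 : (Submodule.span (ZMod 2) (Set.range E) :
      Set (Fin ((m + 1) + (m + 1)) → ZMod 2)) =
      {w | ∃ u : Fin (m + 1) → ZMod 2, w = Fin.append u u} := by
    ext w
    constructor
    · intro hw
      let M : Submodule (ZMod 2) (Fin ((m + 1) + (m + 1)) → ZMod 2) :=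
        { carrier := {w | ∀ j : Fin (m + 1),
            w (Fin.natAdd (m + 1) j) = w (Fin.castAdd (m + 1) j)}
          add_mem' := fun hu hv j => by simp_all
          zero_mem' := fun j => rfl
          smul_mem' := fun r u hu j => by simp_all }
      have hle : Submodule.span (ZMod 2) (Set.range E) ≤ M := by
        rw [Submodule.span_le]
        rintro v ⟨i, rfl⟩ j
        rw [hE, hE]
        have hiff : (Fin.natAdd (m + 1) j = Fin.castAdd (m + 1) i ∨
            Fin.natAdd (m + 1) j = Fin.natAdd (m + 1) i) ↔
            (Fin.castAdd (m + 1) j = Fin.castAdd (m + 1) i ∨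
            Fin.castAdd (m + 1) j = Fin.natAdd (m + 1) i) := by
          have := j.isLt; have := i.isLt
          simp [Fin.ext_iff]
          omega
        rw [if_congr hiff rfl rfl]
      have hwM : ∀ j : Fin (m + 1),
          w (Fin.natAdd (m + 1) j) = w (Fin.castAdd (m + 1) j) := hle hw
      refine ⟨fun j => w (Fin.castAdd (m + 1) j), ?_⟩
      funext k
      refine Fin.addCases (fun j => ?_) (fun j => ?_) k
      · rw [Fin.append_left]
      · rw [Fin.append_right, hwM]
    · rintro ⟨u, rfl⟩
      have hrep : Fin.append u u = ∑ i, u i • E i := by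
        funext k
        rw [Finset.sum_apply]
        refine Fin.addCases (fun j => ?_) (fun j => ?_) k
        · rw [Fin.append_left]
          have h1 : ∀ i : Fin (m + 1),
              u i • E i (Fin.castAdd (m + 1) j) = if i = j then u i else 0 := by
            intro i
            rw [hE]
            rcases eq_or_ne i j with h | h
            · subst h; simp
            · have h' : ¬(Fin.castAdd (m + 1) j = Fin.castAdd (m + 1) i ∨
                  Fin.castAdd (m + 1) j = Fin.natAdd (m + 1) i) := by
                have := j.isLt; have := i.isLt
                have h'' : j.val ≠ i.val := fun hh => h (Fin.ext hh.symm)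
                simp [Fin.ext_iff]
                omega
              rw [if_neg h', smul_zero, if_neg h]
          simp only [Pi.smul_apply]
          rw [Finset.sum_congr rfl fun i _ => h1 i]
          simp
        · rw [Fin.append_right]
          have h1 : ∀ i : Fin (m + 1),
              u i • E i (Fin.natAdd (m + 1) j) = if i = j then u i else 0 := by
            intro i
            rw [hE]
            rcases eq_or_ne i j with h | h
            · subst h; simp [hne]
            · have h' : ¬(Fin.natAdd (m + 1) j = Fin.castAdd (m + 1) i ∨
                  Fin.natAdd (m + 1) j = Fin.natAdd (m + 1) i) := by
                have := j.isLt; have := i.isLt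
                have h'' : j.val ≠ i.val := fun hh => h (Fin.ext hh.symm)
                simp [Fin.ext_iff]
                omega
              rw [if_neg h', smul_zero, if_neg h]
          simp only [Pi.smul_apply]
          rw [Finset.sum_congr rfl fun i _ => h1 i]
          simp
      rw [hrep]
      exact Submodule.sum_mem _ fun i _ =>
        Submodule.smul_mem _ _ (Submodule.subset_span ⟨i, rfl⟩)
  -- Part 3
  have hli : LinearIndependent (ZMod 2) E := by
    apply LinearIndependent.of_comp
      (LinearMap.funLeft (ZMod 2) (ZMod 2) (Fin.castAdd (m + 1)))
    have hcomp : (⇑(LinearMap.funLeft (ZMod 2) (ZMod 2) (Fin.castAdd (m + 1))) ∘ E)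
        = fun i => (Pi.single i 1 : Fin (m + 1) → ZMod 2) := by
      funext i j
      simp only [Function.comp_apply, LinearMap.funLeft_apply, hE, Pi.single_apply]
      have := j.isLt; have := i.isLt
      have hiff : (Fin.castAdd (m + 1) j = Fin.castAdd (m + 1) i ∨
          Fin.castAdd (m + 1) j = Fin.natAdd (m + 1) i) ↔ j = i := by
        simp [Fin.ext_iff]
        omega
      rw [if_congr hiff rfl rfl]
    rw [hcomp]
    have hb := (Pi.basisFun (ZMod 2) (Fin (m + 1))).linearIndependent
    have : ⇑(Pi.basisFun (ZMod 2) (Fin (m + 1))) =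
        fun i => (Pi.single i 1 : Fin (m + 1) → ZMod 2) := by
      funext i
      simp
    rwa [this] at hb
  have part3 : Module.finrank (ZMod 2)
      (Submodule.span (ZMod 2) (Set.range E)) = m + 1 := by
    rw [finrank_span_eq_card hli, Fintype.card_fin]
  exact ⟨key, part2, part3, part4⟩
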